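/- arXiv:2502.01397 — 4 statements merged into one kernel-verified Lean document; each statement's English description precedes it below -/
import Mathlib

section
/- Define a real sequence by d₁ = 2 and d_i = 1 + 1/i² − 1/(d_{i−1}(i−1)²) for i ≥ 2. Then the sequence is well defined with d_i > 0 for all i; moreover 1 − 1/i ≤ d_i < 1 for all i ≥ 2, and consequently d_i → 1 as i → ∞. -/
/-!
Writing `t = 1/n`, the recurrence preserves the invariant `1 - t + t² ≤ d n < 1` for `n ≥ 2`
(it holds with equality at `n = 2`). The lower bound gives `d n · n² ≥ n² - n + 1 ≥ n + 1`,
so the subtracted term `1/(d n · n²)` is at most `1/(n+1)`, which reproduces the lower bound at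
`n + 1`; the upper bound gives `d n · n² < (n+1)²`, so the subtracted term beats `1/(n+1)²`.
Since `1 - t + t² = (t - 1/2)² + 3/4 > 0`, the invariant also gives positivity, and `d n → 1`
by squeezing between `1 - 1/n` and `1`.
-/

open Filter Topology

lemma one_sub_one_div_add_one_div_sq_pos (N : ℝ) : 0 < 1 - 1 / N + 1 / N ^ 2 := by
  rw [← one_div_pow]
  nlinarith [sq_nonneg (1 / N - 1 / 2)]

lemma lower_bound_succ {N x : ℝ} (hN : 2 ≤ N) (hx : 1 - 1 / N + 1 / N ^ 2 ≤ x) :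
    1 - 1 / (N + 1) + 1 / (N + 1) ^ 2 ≤ 1 + 1 / (N + 1) ^ 2 - 1 / (x * N ^ 2) := by
  have hN0 : 0 < N := by linarith
  have hscaled : N + 1 ≤ x * N ^ 2 :=
    calc N + 1 ≤ N ^ 2 - N + 1 := by nlinarith
      _ = (1 - 1 / N + 1 / N ^ 2) * N ^ 2 := by field_simp
      _ ≤ x * N ^ 2 := by gcongr
  have := one_div_le_one_div_of_le (by linarith) hscaled
  linarith

lemma upper_bound_succ {N x : ℝ} (hN : 0 < N) (hx0 : 0 < x) (hx1 : x < 1) :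
    1 + 1 / (N + 1) ^ 2 - 1 / (x * N ^ 2) < 1 := by
  have hscaled : x * N ^ 2 < (N + 1) ^ 2 := by nlinarith
  have := one_div_lt_one_div_of_lt (by positivity) hscaled
  linarith

lemma bounds_of_recurrence (d : ℕ → ℝ) (h1 : d 1 = 2)
    (hrec : ∀ i : ℕ, 2 ≤ i →
      d i = 1 + 1 / (i : ℝ) ^ 2 - 1 / (d (i - 1) * ((i : ℝ) - 1) ^ 2)) :
    ∀ n : ℕ, 2 ≤ n → 1 - 1 / (n : ℝ) + 1 / (n : ℝ) ^ 2 ≤ d n ∧ d n < 1 := by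
  intro n hn
  induction n, hn using Nat.le_induction with
  | base => norm_num [hrec 2 le_rfl, h1]
  | succ n hn ih =>
    have hN : (2 : ℝ) ≤ n := by exact_mod_cast hn
    have hd : d (n + 1) = 1 + 1 / ((n : ℝ) + 1) ^ 2 - 1 / (d n * (n : ℝ) ^ 2) := by
      simpa using hrec (n + 1) (by omega)
    have hpos : 0 < d n := (one_sub_one_div_add_one_div_sq_pos _).trans_le ih.1
    push_cast
    rw [hd]
    exact ⟨lower_bound_succ hN ih.1, upper_bound_succ (by linarith) hpos ih.2⟩

/-- The sequence defined by `d₁ = 2` and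
`d_i = 1 + 1/i² - 1/(d_{i-1}·(i-1)²)` for `i ≥ 2` is well defined with `d_i > 0`
for all `i ≥ 1`; moreover `1 - 1/i ≤ d_i < 1` for all `i ≥ 2`, and consequently
`d_i → 1` as `i → ∞`. -/
theorem stmt_4 (d : ℕ → ℝ) (h1 : d 1 = 2)
    (hrec : ∀ i : ℕ, 2 ≤ i →
      d i = 1 + 1 / (i : ℝ) ^ 2 - 1 / (d (i - 1) * ((i : ℝ) - 1) ^ 2)) :
    (∀ i : ℕ, 1 ≤ i → 0 < d i) ∧
    (∀ i : ℕ, 2 ≤ i → 1 - 1 / (i : ℝ) ≤ d i ∧ d i < 1) ∧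
    Filter.Tendsto d Filter.atTop (nhds 1) := by
  have hbounds := bounds_of_recurrence d h1 hrec
  have hsandwich : ∀ i : ℕ, 2 ≤ i → 1 - 1 / (i : ℝ) ≤ d i ∧ d i < 1 := by
    intro i hi
    have : (0 : ℝ) ≤ 1 / (i : ℝ) ^ 2 := by positivity
    exact ⟨by linarith [(hbounds i hi).1], (hbounds i hi).2⟩
  refine ⟨fun i hi => ?_, hsandwich, ?_⟩
  · rcases hi.eq_or_lt with rfl | hi
    · rw [h1]; norm_num
    · exact (one_sub_one_div_add_one_div_sq_pos _).trans_le (hbounds i hi).1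
  · have hlow : Tendsto (fun i : ℕ => 1 - 1 / (i : ℝ)) atTop (𝓝 1) := by
      simpa using tendsto_one_div_atTop_nhds_zero_nat.const_sub (1 : ℝ)
    refine tendsto_of_tendsto_of_tendsto_of_le_of_le' hlow tendsto_const_nhds ?_ ?_
    · filter_upwards [eventually_ge_atTop 2] with i hi using (hsandwich i hi).1
    · filter_upwards [eventually_ge_atTop 2] with i hi using (hsandwich i hi).2.le
end

section
/- For each n ≥ 1 let A be the n×n symmetric positive definite tridiagonal matrix with A_{11} = 1, A_{ii} = 1 + 1/i² for i ≥ 2, A_{i+1,i} = A_{i,i+1} = 1/i, and let A′ = A + e₁e₁ᵀ, so that A′ − A has exactly one nonzero entry. Let L and L′ be the lower bidiagonal Cholesky factors of A and A′ with positive diagonals. Then for every ε ∈ (0,1) there exists an index N, independent of n, such that |L′_{ii} − L_{ii}| > 1 − ε for all n and all i with N ≤ i ≤ n. In particular, perturbing a single entry of A changes all but finitely many diagonal entries of the Cholesky factor by an amount bounded below by a positive constant: the map A ↦ L is not local. -/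
open Matrix

/-- The `n × n` tridiagonal SPD matrix with `A_{11} = 1`, `A_{ii} = 1 + 1/i²` for `i ≥ 2`,
and `A_{i+1,i} = A_{i,i+1} = 1/i` (1-based indexing). -/
noncomputable def triA (n : ℕ) : Matrix (Fin n) (Fin n) ℝ :=
  Matrix.of fun i j =>
    if i = j then (if i.val = 0 then 1 else 1 + 1 / ((i.val : ℝ) + 1) ^ 2)
    else if i.val = j.val + 1 then 1 / ((j.val : ℝ) + 1)
    else if j.val = i.val + 1 then 1 / ((i.val : ℝ) + 1)
    else 0

/-- `A' = A + e₁e₁ᵀ`: the rank-one perturbation of `triA n` in the `(1,1)` entry, so that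
`A' - A` has exactly one nonzero entry. -/
noncomputable def triA' (n : ℕ) : Matrix (Fin n) (Fin n) ℝ :=
  triA n + Matrix.of fun i j => if i.val = 0 ∧ j.val = 0 then (1 : ℝ) else 0


/-!
For a lower bidiagonal `L`, the equation `A = L Lᵀ` reads `L_{i+1,i} L_{ii} = A_{i+1,i}` and
`L_{i+1,i+1}² = A_{i+1,i+1} - A_{i+1,i}² / L_{ii}²`, so the squared diagonal of `L` is the sequence
of pivots of Gaussian elimination on `A`. For `A` the pivots are exactly `1/i²`, so `L_{ii} = 1/i`;
for `A'` the first pivot is `2` instead of `1`, and the pivots stay above `i/(i+1)` ever after,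
so `L'_{ii} ≥ i/(i+1)` and `L'_{ii} - L_{ii} ≥ 1 - 2/i`.
-/

namespace Matrix

variable {R : Type*} {n : ℕ}

def IsLowerBidiagonal [Zero R] (L : Matrix (Fin n) (Fin n) R) : Prop :=
  ∀ i j : Fin n, i.val ≠ j.val → i.val ≠ j.val + 1 → L i j = 0

namespace IsLowerBidiagonal

section Semiring

variable [Semiring R] {L : Matrix (Fin n) (Fin n) R}

theorem mul_transpose_apply_of_val_eq_succ (hL : L.IsLowerBidiagonal) {i j : Fin n}
    (hij : i.val = j.val + 1) : (L * Lᵀ) i j = L i j * L j j := by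
  rw [mul_apply]
  refine Finset.sum_eq_single j (fun k _ hkj => ?_) (by simp)
  by_cases hki : k = i
  · subst hki
    rw [transpose_apply, hL j k (by omega) (by omega), mul_zero]
  · rw [hL i k (fun h => hki (Fin.ext h.symm)) (fun h => hkj (Fin.ext (by omega))), zero_mul]

theorem mul_transpose_apply_self_of_val_eq_succ (hL : L.IsLowerBidiagonal) {i j : Fin n}
    (hij : i.val = j.val + 1) : (L * Lᵀ) i i = L i i ^ 2 + L i j ^ 2 := by
  have hne : i ≠ j := fun h => by rw [h] at hij; omega
  rw [mul_apply, ← Finset.sum_subset (Finset.subset_univ {i, j}), Finset.sum_pair hne,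
    transpose_apply, transpose_apply, sq, sq]
  intro k _ hk
  simp only [Finset.mem_insert, Finset.mem_singleton, not_or] at hk
  rw [hL i k (fun h => hk.1 (Fin.ext h.symm)) (fun h => hk.2 (Fin.ext (by omega))), zero_mul]

theorem mul_transpose_apply_self_of_val_eq_zero (hL : L.IsLowerBidiagonal) {i : Fin n}
    (hi : i.val = 0) : (L * Lᵀ) i i = L i i ^ 2 := by
  rw [mul_apply, sq]
  refine Finset.sum_eq_single i (fun k _ hki => ?_) (by simp)
  rw [hL i k (fun h => hki (Fin.ext h.symm)) (by omega), zero_mul]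

end Semiring

end IsLowerBidiagonal

end Matrix

section Pivots

variable {R : Type*} [Field R]

/-- The pivots of Gaussian elimination on the symmetric tridiagonal matrix with diagonal `a` and
subdiagonal `b`, i.e. the squared diagonal of its Cholesky factor. -/
def tridiagPivots (a b : ℕ → R) : ℕ → R
  | 0 => a 0
  | k + 1 => a (k + 1) - b k ^ 2 / tridiagPivots a b k

theorem Matrix.IsLowerBidiagonal.sq_diag_eq_tridiagPivots {n : ℕ}
    {L : Matrix (Fin n) (Fin n) R} (hL : L.IsLowerBidiagonal) (hdiag : ∀ i, L i i ≠ 0)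
    {a b : ℕ → R} (ha : ∀ i, (L * Lᵀ) i i = a i)
    (hb : ∀ i j : Fin n, i.val = j.val + 1 → (L * Lᵀ) i j = b j)
    (i : Fin n) : L i i ^ 2 = tridiagPivots a b i := by
  obtain ⟨m, hm⟩ : ∃ m, i.val = m := ⟨_, rfl⟩
  induction m generalizing i with
  | zero => rw [← hL.mul_transpose_apply_self_of_val_eq_zero hm, ha, hm, tridiagPivots]
  | succ m ih =>
    let j : Fin n := ⟨m, by omega⟩
    have hij : i.val = j.val + 1 := hm
    have hsub : L i j = b m / L j j := by
      rw [eq_div_iff (hdiag j), ← hL.mul_transpose_apply_of_val_eq_succ hij, hb i j hij]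
    rw [hm, tridiagPivots, ← ih j rfl, ← hm, ← ha, hL.mul_transpose_apply_self_of_val_eq_succ hij,
      hsub, div_pow, add_sub_cancel_right]

end Pivots

/-- The diagonal of `triA` (for `c = 1`) and of `triA'` (for `c = 2`), indexed from `0`. -/
noncomputable def triDiag (c : ℝ) (k : ℕ) : ℝ :=
  if k = 0 then c else 1 + 1 / ((k : ℝ) + 1) ^ 2

noncomputable def triSub (k : ℕ) : ℝ := 1 / ((k : ℝ) + 1)

section Entries

variable {n : ℕ} {i j : Fin n}

theorem triA_apply_self : triA n i i = triDiag 1 i := by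
  simp [triA, triDiag]

theorem triA'_apply_self : triA' n i i = triDiag 2 i := by
  by_cases hi : i.val = 0 <;> norm_num [triA', triA, triDiag, hi]

theorem triA_apply_of_val_eq_succ (hij : i.val = j.val + 1) : triA n i j = triSub j := by
  have hne : i ≠ j := fun h => by rw [h] at hij; omega
  simp [triA, triSub, hne, hij]

theorem triA'_apply_of_val_eq_succ (hij : i.val = j.val + 1) : triA' n i j = triSub j := by
  simp [triA', triA_apply_of_val_eq_succ hij, hij]

end Entries

theorem tridiagPivots_triDiag_one (k : ℕ) :
    tridiagPivots (triDiag 1) triSub k = 1 / ((k : ℝ) + 1) ^ 2 := by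
  induction k with
  | zero => simp [tridiagPivots, triDiag]
  | succ k ih =>
    rw [tridiagPivots, ih, triDiag, if_neg k.succ_ne_zero, triSub, _root_.one_div_pow,
      div_self (by positivity), add_sub_cancel_left]

theorem div_le_tridiagPivots_succ {c g : ℝ} (hc : 2 ≤ c) (hg : (c + 1) / (c + 2) ≤ g) :
    (c + 2) / (c + 3) ≤ 1 + 1 / (c + 2) ^ 2 - (1 / (c + 1)) ^ 2 / g := by
  have hg0 : 0 < g := lt_of_lt_of_le (by positivity) hg
  have hcubic : (c + 2) * (c + 3) ≤ (c + 1) ^ 3 := by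
    nlinarith [mul_nonneg (sub_nonneg.2 hc) (by positivity : (0 : ℝ) ≤ c ^ 2 + 4 * c + 6)]
  have key : (1 / (c + 1)) ^ 2 / g ≤ 1 / (c + 3) := by
    rw [div_le_iff₀ (by positivity)] at hg
    rw [div_pow, one_pow, div_div, div_le_div_iff₀ (by positivity) (by positivity)]
    nlinarith
  have : (c + 2) / (c + 3) = 1 - 1 / (c + 3) := by field_simp; ring
  have : 0 ≤ 1 / (c + 2) ^ 2 := by positivity
  linarith

theorem div_le_tridiagPivots_triDiag_two (k : ℕ) :
    ((k : ℝ) + 1) / ((k : ℝ) + 2) ≤ tridiagPivots (triDiag 2) triSub k := by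
  induction k with
  | zero => norm_num [tridiagPivots, triDiag]
  | succ k ih =>
    rcases Nat.lt_or_ge k 2 with hk | hk
    -- the inductive step rests on `(c + 2) (c + 3) ≤ (c + 1)³`, false for `c < 2`
    · interval_cases k <;> norm_num [tridiagPivots, triDiag, triSub]
    · rw [tridiagPivots, triDiag, if_neg k.succ_ne_zero, triSub]
      push_cast
      convert div_le_tridiagPivots_succ (by exact_mod_cast hk) ih using 1 <;> ring

section Cholesky

variable {n : ℕ} {L : Matrix (Fin n) (Fin n) ℝ}

theorem triA_cholesky_diag (hL : L.IsLowerBidiagonal) (hpos : ∀ i, 0 < L i i)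
    (hA : triA n = L * Lᵀ) (i : Fin n) : L i i = 1 / ((i : ℝ) + 1) := by
  have hsq := hL.sq_diag_eq_tridiagPivots (fun i => (hpos i).ne') (a := triDiag 1) (b := triSub)
    (fun i => by rw [← hA, triA_apply_self])
    (fun i j hij => by rw [← hA, triA_apply_of_val_eq_succ hij]) i
  rw [tridiagPivots_triDiag_one, ← _root_.one_div_pow] at hsq
  exact (pow_left_inj₀ (hpos i).le (by positivity) two_ne_zero).mp hsq

theorem div_le_triA'_cholesky_diag (hL : L.IsLowerBidiagonal) (hpos : ∀ i, 0 < L i i)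
    (hA : triA' n = L * Lᵀ) (i : Fin n) : ((i : ℝ) + 1) / ((i : ℝ) + 2) ≤ L i i := by
  have hsq := hL.sq_diag_eq_tridiagPivots (fun i => (hpos i).ne') (a := triDiag 2) (b := triSub)
    (fun i => by rw [← hA, triA'_apply_self])
    (fun i j hij => by rw [← hA, triA'_apply_of_val_eq_succ hij]) i
  have hle := div_le_tridiagPivots_triDiag_two i
  rw [← hsq] at hle
  have h0 : 0 ≤ ((i : ℝ) + 1) / ((i : ℝ) + 2) := by positivity
  have h1 : ((i : ℝ) + 1) / ((i : ℝ) + 2) ≤ 1 := (div_le_one (by positivity)).mpr (by linarith)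
  exact (pow_le_pow_iff_left₀ h0 (hpos i).le two_ne_zero).mp ((sq_le h0 h1).trans hle)

theorem one_sub_two_div_le_cholesky_diag_sub {L' : Matrix (Fin n) (Fin n) ℝ}
    (hL : L.IsLowerBidiagonal) (hLpos : ∀ i, 0 < L i i) (hA : triA n = L * Lᵀ)
    (hL' : L'.IsLowerBidiagonal) (hL'pos : ∀ i, 0 < L' i i) (hA' : triA' n = L' * L'ᵀ)
    (i : Fin n) : 1 - 2 / ((i : ℝ) + 1) ≤ L' i i - L i i := by
  have hgap : 1 - 2 / ((i : ℝ) + 1) ≤ ((i : ℝ) + 1) / ((i : ℝ) + 2) - 1 / ((i : ℝ) + 1) := by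
    rw [← sub_nonneg]
    field_simp
    nlinarith
  rw [triA_cholesky_diag hL hLpos hA]
  linarith [div_le_triA'_cholesky_diag hL' hL'pos hA' i]

end Cholesky

theorem stmt_5_general (ε : ℝ) (hε0 : 0 < ε) :
    ∃ N : ℕ, ∀ (n : ℕ) (L L' : Matrix (Fin n) (Fin n) ℝ),
      (∀ i j : Fin n, i.val ≠ j.val → i.val ≠ j.val + 1 → L i j = 0) →
      (∀ i : Fin n, 0 < L i i) → triA n = L * Lᵀ →
      (∀ i j : Fin n, i.val ≠ j.val → i.val ≠ j.val + 1 → L' i j = 0) →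
      (∀ i : Fin n, 0 < L' i i) → triA' n = L' * L'ᵀ →
      ∀ i : Fin n, N ≤ i.val + 1 → 1 - ε < |L' i i - L i i| := by
  refine ⟨⌊2 / ε⌋₊ + 1, fun n L L' hL hLpos hA hL' hL'pos hA' i hN => ?_⟩
  have hi : 2 / ε < (i : ℝ) + 1 :=
    (Nat.lt_floor_add_one _).trans_le (by exact_mod_cast hN)
  have hsmall : 2 / ((i : ℝ) + 1) < ε := by
    rw [div_lt_iff₀ hε0] at hi
    rw [div_lt_iff₀ (by positivity)]
    linarith
  calc 1 - ε < 1 - 2 / ((i : ℝ) + 1) := by linarith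
    _ ≤ L' i i - L i i := one_sub_two_div_le_cholesky_diag_sub hL hLpos hA hL' hL'pos hA' i
    _ ≤ |L' i i - L i i| := le_abs_self _

/-- For every `ε ∈ (0,1)` there exists an index `N`, independent of `n`, such
that for every `n`, whenever `L` and `L'` are the lower bidiagonal Cholesky factors (with
positive diagonals) of `triA n` and `triA' n = triA n + e₁e₁ᵀ` respectively, we have
`|L'_{ii} - L_{ii}| > 1 - ε` for all (1-based) indices `i` with `N ≤ i ≤ n`:
the map `A ↦ L` is not local. -/
theorem stmt_5 (ε : ℝ) (hε0 : 0 < ε) (hε1 : ε < 1) :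
    ∃ N : ℕ, ∀ (n : ℕ) (L L' : Matrix (Fin n) (Fin n) ℝ),
      (∀ i j : Fin n, i.val ≠ j.val → i.val ≠ j.val + 1 → L i j = 0) →
      (∀ i : Fin n, 0 < L i i) → triA n = L * Lᵀ →
      (∀ i j : Fin n, i.val ≠ j.val → i.val ≠ j.val + 1 → L' i j = 0) →
      (∀ i : Fin n, 0 < L' i i) → triA' n = L' * L'ᵀ →
      ∀ i : Fin n, N ≤ i.val + 1 → 1 - ε < |L' i i - L i i| :=
  stmt_5_general ε hε0
end

section
/- Let A be a real symmetric positive definite n×n matrix and B = A⁻¹. Fix a lower triangular sparsity pattern S ⊆ {(i,j) : 1 ≤ j ≤ i ≤ n} containing all diagonal pairs (j,j). For each column j let s⁽ʲ⁾ = (s₁ = j < s₂ < … < s_{k_j}) be the rows i with (i,j) ∈ S, let B_j be the k_j×k_j principal submatrix of B with rows and columns s⁽ʲ⁾, and let v_j = B_j⁻¹ e₁ where e₁ is the first standard basis vector of ℝ^{k_j}. Then (v_j)₁ > 0 for every j, and the lower triangular matrix L defined by placing the values ((v_j)₁)^{−1/2} v_j in the positions s⁽ʲ⁾ of column j (and zeros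 elsewhere) has positive diagonal and minimizes the K-condition number K(Lᵀ A⁻¹ L) = (Tr(Lᵀ A⁻¹ L)/n)/(det(Lᵀ A⁻¹ L))^{1/n} over all lower triangular matrices with positive diagonal whose nonzero entries lie in S. -/
/-!
For lower triangular `N` and `B = A⁻¹`, `tr (Nᵀ B N) = ∑ⱼ qⱼ` with `qⱼ = Nⱼᵀ B Nⱼ` for the columns
`Nⱼ`, and `det (Nᵀ B N) = (∏ⱼ Nⱼⱼ)² det B`. If column `j` is supported on its pattern, `qⱼ` is a
quadratic form in the principal submatrix `Bⱼ`, and minimizing it with `Nⱼⱼ` fixed gives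
`qⱼ ≥ Nⱼⱼ² / (vⱼ)₁`, with equality along `vⱼ = Bⱼ⁻¹ e₁`. AM–GM applied to the ratios
`Nⱼⱼ² / (vⱼ)₁` bounds `K(Nᵀ B N)` below by `((∏ⱼ (vⱼ)₁) det B)^(-1/n)`, and `L` attains this
bound because its columns have `qⱼ = 1` and `Lⱼⱼ² = (vⱼ)₁`.
-/

open Matrix

/-- The K-condition number `K(M) = (Tr(M)/n)/(det M)^{1/n}` of an `n × n` matrix. -/
noncomputable def Kcond (n : ℕ) (M : Matrix (Fin n) (Fin n) ℝ) : ℝ :=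
  (M.trace / n) / M.det ^ ((1 : ℝ) / n)

theorem Fintype.sum_subtype_of_support {ι M : Type*} [Fintype ι] {p : ι → Prop}
    [Fintype (Subtype p)] [AddCommMonoid M] (f : ι → M) (hf : ∀ i, ¬p i → f i = 0) :
    ∑ i : Subtype p, f i = ∑ i, f i := by
  classical
  rw [← Finset.sum_subtype (Finset.univ.filter p) (by simp), Finset.sum_filter_of_ne]
  exact fun i _ hfi => by_contra fun hpi => hfi (hf i hpi)

namespace Matrix

theorem dotProduct_mulVec_submatrix_val {ι R : Type*} [Fintype ι] {p : ι → Prop}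
    [Fintype (Subtype p)] [CommSemiring R] (M : Matrix ι ι R)
    {x : ι → R} (hx : ∀ i, ¬p i → x i = 0) :
    (fun i : Subtype p => x i) ⬝ᵥ M.submatrix Subtype.val Subtype.val *ᵥ
      (fun i : Subtype p => x i) = x ⬝ᵥ M *ᵥ x := by
  simp only [dotProduct, mulVec, submatrix_apply]
  rw [← Fintype.sum_subtype_of_support (p := p) _ fun i hi => by simp [hx i hi]]
  congr! 2 with i
  exact Fintype.sum_subtype_of_support (p := p) (fun j => M i j * x j) fun j hj => by
    simp [hx j hj]

section InverseColumn

variable {κ : Type*} [Fintype κ] [DecidableEq κ] {M : Matrix κ κ ℝ}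

theorem PosDef.dotProduct_mulVec_inv_mulVec_single (hM : M.PosDef) (k : κ) (x : κ → ℝ) :
    x ⬝ᵥ M *ᵥ (M⁻¹ *ᵥ Pi.single k 1) = x k := by
  rw [mulVec_mulVec, mul_nonsing_inv M hM.det_pos.ne'.isUnit, one_mulVec, dotProduct_single,
    mul_one]

theorem PosDef.inv_mulVec_single_dotProduct_mulVec (hM : M.PosDef) (k : κ) (x : κ → ℝ) :
    (M⁻¹ *ᵥ Pi.single k 1) ⬝ᵥ M *ᵥ x = x k := by
  rw [← dotProduct_transpose_mulVec, (by simpa using hM.isHermitian : M.IsSymm).eq]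
  exact hM.dotProduct_mulVec_inv_mulVec_single k x

theorem PosDef.inv_mulVec_single_apply_pos (hM : M.PosDef) (k : κ) :
    0 < (M⁻¹ *ᵥ Pi.single k 1) k := by
  rw [mulVec_single_one]
  exact hM.inv.diag_pos

theorem PosDef.sq_div_le_dotProduct_mulVec (hM : M.PosDef) (k : κ) (x : κ → ℝ) :
    x k ^ 2 / (M⁻¹ *ᵥ Pi.single k 1) k ≤ x ⬝ᵥ M *ᵥ x := by
  set w := M⁻¹ *ᵥ Pi.single k 1
  have hw : 0 < w k := hM.inv_mulVec_single_apply_pos k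
  -- completing the square: `(x - c • w)ᵀ M (x - c • w) = xᵀ M x - x k ^ 2 / w k`
  set c := x k / w k
  have hwx : w ⬝ᵥ M *ᵥ x = x k := hM.inv_mulVec_single_dotProduct_mulVec k x
  have hxw : x ⬝ᵥ M *ᵥ w = x k := hM.dotProduct_mulVec_inv_mulVec_single k x
  have hww : w ⬝ᵥ M *ᵥ w = w k := hM.dotProduct_mulVec_inv_mulVec_single k w
  have hnonneg := hM.posSemidef.dotProduct_mulVec_nonneg (x - c • w)
  simp only [star_trivial, mulVec_sub, mulVec_smul, sub_dotProduct, dotProduct_sub,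
    smul_dotProduct, dotProduct_smul, smul_eq_mul, hwx, hxw, hww] at hnonneg
  have hc : c * w k = x k := div_mul_cancel₀ _ hw.ne'
  have hcx : c * x k = x k ^ 2 / w k := by rw [div_mul_eq_mul_div, sq]
  rw [hc, sub_self, mul_zero, sub_zero, hcx, sub_nonneg] at hnonneg
  exact hnonneg

theorem PosDef.inv_sqrt_smul_inv_mulVec_single_dotProduct_mulVec_self (hM : M.PosDef) (k : κ) :
    ((√((M⁻¹ *ᵥ Pi.single k 1) k))⁻¹ • M⁻¹ *ᵥ Pi.single k 1) ⬝ᵥ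
      M *ᵥ ((√((M⁻¹ *ᵥ Pi.single k 1) k))⁻¹ • M⁻¹ *ᵥ Pi.single k 1) = 1 := by
  have hw := hM.inv_mulVec_single_apply_pos k
  rw [mulVec_smul, smul_dotProduct, dotProduct_smul, hM.dotProduct_mulVec_inv_mulVec_single,
    smul_eq_mul, smul_eq_mul, ← mul_assoc, ← mul_inv, Real.mul_self_sqrt hw.le,
    inv_mul_cancel₀ hw.ne']

end InverseColumn

section PatternColumn

variable {ι : Type*} [Fintype ι] [DecidableEq ι] {M : Matrix ι ι ℝ} {p : ι → Prop}
  [Fintype (Subtype p)]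

theorem PosDef.sq_div_le_dotProduct_mulVec_of_support (hM : M.PosDef) (k : Subtype p)
    {x : ι → ℝ} (hx : ∀ i, ¬p i → x i = 0) :
    x k ^ 2 / ((M.submatrix Subtype.val Subtype.val)⁻¹ *ᵥ Pi.single k 1) k ≤ x ⬝ᵥ M *ᵥ x := by
  rw [← dotProduct_mulVec_submatrix_val M hx]
  exact (hM.submatrix Subtype.val_injective).sq_div_le_dotProduct_mulVec k fun i => x i

theorem PosDef.dotProduct_mulVec_self_eq_one_of_support (hM : M.PosDef) (k : Subtype p)
    {x : ι → ℝ} (hx : ∀ i, ¬p i → x i = 0)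
    (hxp : (fun i : Subtype p => x i) =
      (√(((M.submatrix Subtype.val Subtype.val)⁻¹ *ᵥ Pi.single k 1) k))⁻¹ •
        (M.submatrix Subtype.val Subtype.val)⁻¹ *ᵥ Pi.single k 1) :
    x ⬝ᵥ M *ᵥ x = 1 := by
  rw [← dotProduct_mulVec_submatrix_val M hx, hxp]
  exact (hM.submatrix Subtype.val_injective).inv_sqrt_smul_inv_mulVec_single_dotProduct_mulVec_self
    k

end PatternColumn

theorem trace_transpose_mul_mul {ι R : Type*} [Fintype ι] [CommSemiring R]
    (B N : Matrix ι ι R) : (Nᵀ * B * N).trace = ∑ j, N.col j ⬝ᵥ B *ᵥ N.col j := by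
  refine Finset.sum_congr rfl fun j _ => ?_
  rw [diag_apply, mul_apply', dotProduct_mulVec]
  rfl

theorem det_transpose_mul_mul_of_isLowerTriangular {ι R : Type*} [Fintype ι] [LinearOrder ι]
    [DecidableEq ι] [CommRing R] (B : Matrix ι ι R) {N : Matrix ι ι R}
    (hN : N.IsLowerTriangular) : (Nᵀ * B * N).det = (∏ i, N i i) ^ 2 * B.det := by
  rw [det_mul, det_mul, det_transpose, det_of_isLowerTriangular N hN]
  ring

theorem isLowerTriangular_of_support {ι R : Type*} [LinearOrder ι] [Zero R]
    {S : Finset (ι × ι)} (hS : ∀ p ∈ S, p.2 ≤ p.1) {N : Matrix ι ι R}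
    (hN : ∀ i j, (i, j) ∉ S → N i j = 0) : N.IsLowerTriangular :=
  fun i j hij => hN i j fun h => (hS _ h).not_gt hij

end Matrix

section Kcond

variable {n : ℕ} {B N : Matrix (Fin n) (Fin n) ℝ}

theorem Kcond_transpose_mul_mul (hN : N.IsLowerTriangular) :
    Kcond n (Nᵀ * B * N) =
      ((∑ j, N.col j ⬝ᵥ B *ᵥ N.col j) / n) / ((∏ j, N j j) ^ 2 * B.det) ^ ((1 : ℝ) / n) := by
  rw [Kcond, trace_transpose_mul_mul, det_transpose_mul_mul_of_isLowerTriangular B hN]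

theorem Kcond_transpose_mul_mul_of_dotProduct_mulVec_col_eq_one (hn : n ≠ 0)
    (hN : N.IsLowerTriangular) (hcol : ∀ j, N.col j ⬝ᵥ B *ᵥ N.col j = 1) :
    Kcond n (Nᵀ * B * N) = 1 / ((∏ j, N j j) ^ 2 * B.det) ^ ((1 : ℝ) / n) := by
  simp [Kcond_transpose_mul_mul hN, hcol, hn]

theorem one_div_rpow_le_Kcond_transpose_mul_mul (hn : 0 < n) (hB : 0 < B.det)
    (hN : N.IsLowerTriangular) (hNdiag : ∀ j, N j j ≠ 0) {a : Fin n → ℝ} (ha : ∀ j, 0 < a j)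
    (hcol : ∀ j, N j j ^ 2 / a j ≤ N.col j ⬝ᵥ B *ᵥ N.col j) :
    1 / ((∏ j, a j) * B.det) ^ ((1 : ℝ) / n) ≤ Kcond n (Nᵀ * B * N) := by
  set t : Fin n → ℝ := fun j => N j j ^ 2 / a j
  have ht : ∀ j, 0 < t j := fun j => div_pos (sq_pos_of_ne_zero (hNdiag j)) (ha j)
  have hX : 0 < (∏ j, a j) * B.det := mul_pos (Finset.prod_pos fun j _ => ha j) hB
  have hsplit : (∏ j, N j j) ^ 2 * B.det = (∏ j, t j) * ((∏ j, a j) * B.det) := by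
    rw [← mul_assoc, ← Finset.prod_mul_distrib, ← Finset.prod_pow]
    simp only [t, div_mul_cancel₀ _ (ha _).ne']
  have amgm : (∏ j, t j) ^ ((1 : ℝ) / n) ≤ (∑ j, N.col j ⬝ᵥ B *ᵥ N.col j) / n := by
    have := Real.geom_mean_le_arith_mean Finset.univ (fun _ => 1) t (fun _ _ => zero_le_one)
      (by simp [hn]) (fun j _ => (ht j).le)
    simp only [Real.rpow_one, one_mul, Finset.sum_const, Finset.card_univ, Fintype.card_fin,
      nsmul_eq_mul, mul_one] at this
    rw [one_div]
    exact this.trans (div_le_div_of_nonneg_right (Finset.sum_le_sum fun j _ => hcol j)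
      (Nat.cast_nonneg n))
  rw [Kcond_transpose_mul_mul hN, hsplit,
    Real.mul_rpow (Finset.prod_nonneg fun j _ => (ht j).le) hX.le, ← div_div]
  refine div_le_div_of_nonneg_right ?_ (Real.rpow_nonneg hX.le _)
  exact (one_le_div (Real.rpow_pos_of_pos (Finset.prod_pos fun j _ => ht j) _)).mpr amgm

end Kcond

theorem stmt_15_general (n : ℕ) (hn : 0 < n) (A : Matrix (Fin n) (Fin n) ℝ)
    (hApd : A.PosDef)
    (B : Matrix (Fin n) (Fin n) ℝ) (hB : B = A⁻¹)
    (S : Finset (Fin n × Fin n))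
    (hlow : ∀ p ∈ S, p.2 ≤ p.1)
    (hdiag : ∀ j : Fin n, (j, j) ∈ S)
    (v : (j : Fin n) → ({i : Fin n // (i, j) ∈ S} → ℝ))
    (hv : ∀ j : Fin n,
      v j = (B.submatrix (fun k : {i : Fin n // (i, j) ∈ S} => (k : Fin n))
              (fun k : {i : Fin n // (i, j) ∈ S} => (k : Fin n)))⁻¹ *ᵥ
            Pi.single ⟨j, hdiag j⟩ 1)
    (L : Matrix (Fin n) (Fin n) ℝ)
    (hL : ∀ i j : Fin n, L i j =
      if h : (i, j) ∈ S then (Real.sqrt (v j ⟨j, hdiag j⟩))⁻¹ * v j ⟨i, h⟩ else 0) :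
    (∀ j : Fin n, 0 < v j ⟨j, hdiag j⟩) ∧
    (∀ i : Fin n, 0 < L i i) ∧
    (∀ L' : Matrix (Fin n) (Fin n) ℝ,
      (∀ i j : Fin n, (i, j) ∉ S → L' i j = 0) →
      (∀ i : Fin n, 0 < L' i i) →
      Kcond n (Lᵀ * A⁻¹ * L) ≤ Kcond n (L'ᵀ * A⁻¹ * L')) := by
  subst hB
  have hvpos (j : Fin n) : 0 < v j ⟨j, hdiag j⟩ := by
    rw [hv j]
    exact (hApd.inv.submatrix Subtype.val_injective).inv_mulVec_single_apply_pos _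
  have hLS (i j : Fin n) (hij : (i, j) ∉ S) : L i j = 0 := by rw [hL, dif_neg hij]
  have hLdiag (j : Fin n) : L j j ^ 2 = v j ⟨j, hdiag j⟩ := by
    rw [hL, dif_pos (hdiag j), mul_pow, inv_pow, Real.sq_sqrt (hvpos j).le, sq,
      inv_mul_cancel_left₀ (hvpos j).ne']
  have hLpos (j : Fin n) : 0 < L j j := by
    rw [hL, dif_pos (hdiag j)]
    exact mul_pos (inv_pos.mpr (Real.sqrt_pos.mpr (hvpos j))) (hvpos j)
  refine ⟨hvpos, hLpos, fun L' hL'S hL'pos => ?_⟩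
  have hLquad (j : Fin n) : L.col j ⬝ᵥ A⁻¹ *ᵥ L.col j = 1 := by
    refine hApd.inv.dotProduct_mulVec_self_eq_one_of_support ⟨j, hdiag j⟩ (hLS · j) ?_
    rw [← hv j]
    exact funext fun i => by rw [col_apply, hL, dif_pos i.2]; rfl
  have hL'quad (j : Fin n) :
      L' j j ^ 2 / v j ⟨j, hdiag j⟩ ≤ L'.col j ⬝ᵥ A⁻¹ *ᵥ L'.col j := by
    rw [hv j]
    exact hApd.inv.sq_div_le_dotProduct_mulVec_of_support ⟨j, hdiag j⟩ (hL'S · j)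
  calc Kcond n (Lᵀ * A⁻¹ * L)
      = 1 / ((∏ j, v j ⟨j, hdiag j⟩) * A⁻¹.det) ^ ((1 : ℝ) / n) := by
        rw [Kcond_transpose_mul_mul_of_dotProduct_mulVec_col_eq_one hn.ne'
          (isLowerTriangular_of_support hlow hLS) hLquad, ← Finset.prod_pow]
        simp only [hLdiag]
    _ ≤ Kcond n (L'ᵀ * A⁻¹ * L') :=
        one_div_rpow_le_Kcond_transpose_mul_mul hn hApd.inv.det_pos
          (isLowerTriangular_of_support hlow hL'S) (fun j => (hL'pos j).ne') hvpos hL'quad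

/-- Let `A` be SPD, `B = A⁻¹`, and `S` a lower triangular sparsity pattern
containing the diagonal. For each column `j`, let `B_j` be the principal submatrix of `B`
indexed by the rows `i` with `(i, j) ∈ S` (whose first index is `s₁ = j`, the smallest),
and `v_j = B_j⁻¹ e₁` where `e₁` is the standard basis vector at position `j`. Then
`(v_j)₁ > 0` for every `j`, the lower triangular matrix `L` with column `j` equal to
`((v_j)₁)^{-1/2} v_j` on the positions of `S` (zero elsewhere) has positive diagonal, and
`L` minimizes the K-condition number `K(Lᵀ A⁻¹ L)` over all lower triangular matrices with
positive diagonal whose nonzero entries lie in `S`. -/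
theorem stmt_15 (n : ℕ) (hn : 0 < n) (A : Matrix (Fin n) (Fin n) ℝ)
    (hAs : A.IsSymm) (hApd : A.PosDef)
    (B : Matrix (Fin n) (Fin n) ℝ) (hB : B = A⁻¹)
    (S : Finset (Fin n × Fin n))
    (hlow : ∀ p ∈ S, p.2 ≤ p.1)
    (hdiag : ∀ j : Fin n, (j, j) ∈ S)
    (v : (j : Fin n) → ({i : Fin n // (i, j) ∈ S} → ℝ))
    (hv : ∀ j : Fin n,
      v j = (B.submatrix (fun k : {i : Fin n // (i, j) ∈ S} => (k : Fin n))
              (fun k : {i : Fin n // (i, j) ∈ S} => (k : Fin n)))⁻¹ *ᵥ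
            Pi.single ⟨j, hdiag j⟩ 1)
    (L : Matrix (Fin n) (Fin n) ℝ)
    (hL : ∀ i j : Fin n, L i j =
      if h : (i, j) ∈ S then (Real.sqrt (v j ⟨j, hdiag j⟩))⁻¹ * v j ⟨i, h⟩ else 0) :
    (∀ j : Fin n, 0 < v j ⟨j, hdiag j⟩) ∧
    (∀ i : Fin n, 0 < L i i) ∧
    (∀ L' : Matrix (Fin n) (Fin n) ℝ,
      (∀ i j : Fin n, (i, j) ∉ S → L' i j = 0) →
      (∀ i : Fin n, 0 < L' i i) →
      Kcond n (Lᵀ * A⁻¹ * L) ≤ Kcond n (L'ᵀ * A⁻¹ * L')) :=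
  stmt_15_general n hn A hApd B hB S hlow hdiag v hv L hL
end

section
/- Let u, v ∈ ℝⁿ with u_i v_i ≠ 0 for all i, and let T be the lower triangular n×n matrix with T_{ij} = u_i v_j for i ≥ j and T_{ij} = 0 for i < j. Then T is invertible and T⁻¹ is lower bidiagonal: (T⁻¹)_{ij} = 0 unless j = i or j = i−1. -/
open Matrix

/-! `T = diagonal u * L * diagonal v`, where `L` is the all-ones lower triangular matrix, i.e. the
prefix-sum operator. Its inverse is the backward-difference operator `1 - S`, `S` the down-shift,
because `S * L = L - 1`. Hence `T⁻¹ = diagonal v⁻¹ * (1 - S) * diagonal u⁻¹`, which is lower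
bidiagonal. -/

namespace Matrix

variable (n : ℕ) (R : Type*)

def prefixSum [Zero R] [One R] : Matrix (Fin n) (Fin n) R :=
  of fun i j => if j ≤ i then 1 else 0

def shiftDown [Zero R] [One R] : Matrix (Fin n) (Fin n) R :=
  of fun i j => if (j : ℕ) + 1 = i then 1 else 0

def backwardDiff [Ring R] : Matrix (Fin n) (Fin n) R :=
  1 - shiftDown n R

variable {n R}

theorem shiftDown_mul_prefixSum [Ring R] : shiftDown n R * prefixSum n R = prefixSum n R - 1 := by
  ext i k
  simp only [mul_apply, shiftDown, prefixSum, of_apply, ite_mul, one_mul, zero_mul, sub_apply,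
    one_apply]
  obtain ⟨_ | m, hi⟩ := i
  · simp [Fin.ext_iff, Fin.le_def, eq_comm]
  · have hpred : ∀ j : Fin n, (j : ℕ) + 1 = m + 1 ↔ j = ⟨m, by omega⟩ := by simp [Fin.ext_iff]
    simp only [hpred, Finset.sum_ite_eq', Finset.mem_univ, if_true]
    simp only [Fin.le_def, Fin.ext_iff]
    split_ifs <;> first | omega | simp

theorem backwardDiff_mul_prefixSum [Ring R] : backwardDiff n R * prefixSum n R = 1 := by
  rw [backwardDiff, sub_mul, shiftDown_mul_prefixSum, one_mul, sub_sub_cancel]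

theorem backwardDiff_apply_eq_zero [Ring R] {i j : Fin n} (h₀ : (i : ℕ) ≠ j)
    (h₁ : (i : ℕ) ≠ j + 1) : backwardDiff n R i j = 0 := by
  simp [backwardDiff, shiftDown, Fin.ext_iff, h₀, Ne.symm h₁]

theorem diagonal_mul_prefixSum_mul_diagonal_apply [Semiring R] (u v : Fin n → R) (i j : Fin n) :
    (diagonal u * prefixSum n R * diagonal v) i j = if j ≤ i then u i * v j else 0 := by
  simp [diagonal_mul, mul_diagonal, prefixSum]

theorem diagonal_inv_mul_backwardDiff_mul_prefixSum {K : Type*} [Field K] {u v : Fin n → K}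
    (hu : ∀ i, u i ≠ 0) (hv : ∀ i, v i ≠ 0) :
    (diagonal v⁻¹ * backwardDiff n K * diagonal u⁻¹) * (diagonal u * prefixSum n K * diagonal v)
      = 1 := by
  have hu' : diagonal u⁻¹ * diagonal u = 1 := by simp [diagonal_mul_diagonal, hu]
  have hv' : diagonal v⁻¹ * diagonal v = 1 := by simp [diagonal_mul_diagonal, hv]
  calc _ = diagonal v⁻¹ * (backwardDiff n K * (diagonal u⁻¹ * diagonal u) * prefixSum n K)
        * diagonal v := by simp only [Matrix.mul_assoc]
    _ = 1 := by rw [hu', Matrix.mul_one, backwardDiff_mul_prefixSum, Matrix.mul_one, hv']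

end Matrix

/-- Let `u, v ∈ ℝⁿ` with `u_i v_i ≠ 0` for all `i`, and let `T` be the lower
triangular matrix with `T_{ij} = u_i v_j` for `i ≥ j` and `T_{ij} = 0` for `i < j`. Then
`T` is invertible and `T⁻¹` is lower bidiagonal: `(T⁻¹)_{ij} = 0` unless `j = i` or
`j = i-1`. -/
theorem stmt_18 (n : ℕ) (u v : Fin n → ℝ) (huv : ∀ i : Fin n, u i * v i ≠ 0)
    (T : Matrix (Fin n) (Fin n) ℝ)
    (hT : ∀ i j : Fin n, T i j = if j ≤ i then u i * v j else 0) :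
    IsUnit T.det ∧
    ∀ i j : Fin n, i.val ≠ j.val → i.val ≠ j.val + 1 → T⁻¹ i j = 0 := by
  have hT' : T = diagonal u * prefixSum n ℝ * diagonal v := by
    ext i j; rw [hT, diagonal_mul_prefixSum_mul_diagonal_apply]
  have hleft := diagonal_inv_mul_backwardDiff_mul_prefixSum
    (fun i => left_ne_zero_of_mul (huv i)) (fun i => right_ne_zero_of_mul (huv i))
  rw [← hT'] at hleft
  refine ⟨isUnit_det_of_left_inverse hleft, fun i j h₀ h₁ => ?_⟩
  rw [inv_eq_left_inv hleft, mul_diagonal, diagonal_mul, backwardDiff_apply_eq_zero h₀ h₁,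
    mul_zero, zero_mul]
end
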